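/- arXiv:0707.3715 — 2 statements merged into one kernel-verified Lean document; each statement's English description precedes it below -/
import Mathlib

section
/- Let (M_n) be a locally square integrable real martingale with M_0 = 0. Then for all x > 0 and y > 0, P(|M_n| ≥ x and [M]_n + ⟨M⟩_n ≤ y) ≤ 2 exp(−x²/(2y)). -/
/-!
For `c ≥ 0` the process `exp (c Mₙ - c²/2 ([M]ₙ + ⟨M⟩ₙ))` is a supermartingale starting at `1`:
its one-step factor `exp (c ΔM - c²/2 ΔM²)` is at most `1 + c ΔM + c²/2 ΔM²` by the elementary
inequality `exp (u - u²/2) ≤ 1 + u + u²/2`, so its conditional expectation is at most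
`1 + c²/2 E[ΔM² | F] ≤ exp (c²/2 E[ΔM² | F])`, which the compensating factor cancels.
Markov's inequality with `c = x / y` then bounds `P(Mₙ ≥ x, [M]ₙ + ⟨M⟩ₙ ≤ y)` by
`exp (-x²/(2y))`, and the same bound for `-M` gives the two-sided inequality.
-/

open MeasureTheory Real Finset

namespace Real

theorem mul_sub_sq_mul_sq_div_two_le (c d : ℝ) : c * d - c ^ 2 / 2 * d ^ 2 ≤ 1 / 2 := by
  nlinarith [sq_nonneg (c * d - 1)]

/-- `exp a ≤ 1 / (1 - a)` for `a = u - u²/2`, and `(1 + u + u²/2) (1 - u + u²/2) = 1 + u⁴/4`. -/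
theorem exp_sub_sq_div_two_le (u : ℝ) : exp (u - u ^ 2 / 2) ≤ 1 + u + u ^ 2 / 2 := by
  have hinv : exp (u - u ^ 2 / 2) * (1 - u + u ^ 2 / 2) ≤ 1 := by
    calc exp (u - u ^ 2 / 2) * (1 - u + u ^ 2 / 2)
        = exp (u - u ^ 2 / 2) * (-(u - u ^ 2 / 2) + 1) := by ring
      _ ≤ exp (u - u ^ 2 / 2) * exp (-(u - u ^ 2 / 2)) := by
        gcongr; exact add_one_le_exp _
      _ = 1 := by rw [← exp_add, add_neg_cancel, exp_zero]
  have hprod : 1 ≤ (1 + u + u ^ 2 / 2) * (1 - u + u ^ 2 / 2) := by nlinarith [sq_nonneg (u ^ 2)]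
  have hpos : 0 < 1 + u + u ^ 2 / 2 := by nlinarith [sq_nonneg (u + 1)]
  calc exp (u - u ^ 2 / 2) ≤ exp (u - u ^ 2 / 2) * ((1 + u + u ^ 2 / 2) * (1 - u + u ^ 2 / 2)) :=
        le_mul_of_one_le_right (exp_pos _).le hprod
    _ = (1 + u + u ^ 2 / 2) * (exp (u - u ^ 2 / 2) * (1 - u + u ^ 2 / 2)) := by ring
    _ ≤ 1 + u + u ^ 2 / 2 := mul_le_of_le_one_right hpos.le hinv

end Real

namespace MeasureTheory

variable {Ω : Type*} {m0 : MeasurableSpace Ω} {μ : Measure Ω}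

theorem integrable_exp_mul_sub_sq [IsFiniteMeasure μ] {D : Ω → ℝ}
    (hD : AEStronglyMeasurable D μ) (c : ℝ) :
    Integrable (fun ω => exp (c * D ω - c ^ 2 / 2 * D ω ^ 2)) μ := by
  refine .of_bound (by fun_prop) (exp (1 / 2)) (ae_of_all _ fun ω => ?_)
  rw [norm_of_nonneg (exp_pos _).le, exp_le_exp]
  exact mul_sub_sq_mul_sq_div_two_le c (D ω)

theorem condExp_exp_mul_sub_sq_le [IsFiniteMeasure μ] {m : MeasurableSpace Ω} (hm : m ≤ m0)
    {D : Ω → ℝ} (hD : MemLp D 2 μ) (hD0 : μ[D | m] =ᵐ[μ] 0) (c : ℝ) :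
    μ[fun ω => exp (c * D ω - c ^ 2 / 2 * D ω ^ 2) | m]
      ≤ᵐ[μ] fun ω => exp (c ^ 2 / 2 * μ[fun ω => D ω ^ 2 | m] ω) := by
  have hDint : Integrable D μ := hD.integrable one_le_two
  have hD2int : Integrable (fun ω => D ω ^ 2) μ := hD.integrable_sq
  have hbound : (fun ω => exp (c * D ω - c ^ 2 / 2 * D ω ^ 2))
      ≤ (fun _ => 1) + c • D + (c ^ 2 / 2) • fun ω => D ω ^ 2 := fun ω => by
    simp only [Pi.add_apply, Pi.smul_apply, smul_eq_mul]
    convert exp_sub_sq_div_two_le (c * D ω) using 2 <;> ring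
  filter_upwards [condExp_mono (integrable_exp_mul_sub_sq hD.1 c)
      (((integrable_const 1).add (hDint.smul c)).add (hD2int.smul _)) (ae_of_all _ hbound),
    condExp_add ((integrable_const 1).add (hDint.smul c)) (hD2int.smul (c ^ 2 / 2)) m,
    condExp_add (integrable_const 1) (hDint.smul c) m, condExp_smul c D m,
    condExp_smul (c ^ 2 / 2) (fun ω => D ω ^ 2) m, hD0] with ω hmono hadd hadd' hsmul hsmul' h0
  simp only [Pi.add_apply, Pi.smul_apply, smul_eq_mul, Pi.zero_apply, condExp_const hm]
    at hmono hadd hadd' hsmul hsmul' h0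
  rw [hadd, hadd', hsmul, hsmul', h0] at hmono
  linarith [add_one_le_exp (c ^ 2 / 2 * μ[fun ω => D ω ^ 2 | m] ω)]

section QuadraticVariation

variable (μ : Measure Ω) (ℱ : Filtration ℕ m0) (M : ℕ → Ω → ℝ)

def quadraticVariation (n : ℕ) (ω : Ω) : ℝ :=
  ∑ k ∈ Icc 1 n, (M k ω - M (k - 1) ω) ^ 2

noncomputable def predictableQuadraticVariation (n : ℕ) (ω : Ω) : ℝ :=
  ∑ k ∈ Icc 1 n, μ[fun ω' => (M k ω' - M (k - 1) ω') ^ 2 | ℱ (k - 1)] ω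

noncomputable def exponentialProcess (c : ℝ) (n : ℕ) (ω : Ω) : ℝ :=
  exp (c * M n ω
    - c ^ 2 / 2 * (quadraticVariation M n ω + predictableQuadraticVariation μ ℱ M n ω))

theorem exponentialProcess_pos (c : ℝ) (n : ℕ) (ω : Ω) : 0 < exponentialProcess μ ℱ M c n ω :=
  exp_pos _

theorem quadraticVariation_succ (n : ℕ) (ω : Ω) :
    quadraticVariation M (n + 1) ω = quadraticVariation M n ω + (M (n + 1) ω - M n ω) ^ 2 := by
  simp [quadraticVariation, sum_Icc_succ_top]

theorem predictableQuadraticVariation_succ (n : ℕ) (ω : Ω) :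
    predictableQuadraticVariation μ ℱ M (n + 1) ω = predictableQuadraticVariation μ ℱ M n ω
      + μ[fun ω' => (M (n + 1) ω' - M n ω') ^ 2 | ℱ n] ω := by
  simp [predictableQuadraticVariation, sum_Icc_succ_top]

theorem quadraticVariation_neg : quadraticVariation (-M) = quadraticVariation M := by
  ext n ω
  simp only [quadraticVariation, Pi.neg_apply, neg_sub_neg, sub_sq_comm (M (_ - 1) _)]

theorem predictableQuadraticVariation_neg :
    predictableQuadraticVariation μ ℱ (-M) = predictableQuadraticVariation μ ℱ M := by
  ext n ω
  simp only [predictableQuadraticVariation, Pi.neg_apply, neg_sub_neg, sub_sq_comm (M (_ - 1) _)]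

theorem exponentialProcess_zero {c : ℝ} (hM0 : M 0 = 0) : exponentialProcess μ ℱ M c 0 = 1 := by
  ext ω
  simp [exponentialProcess, quadraticVariation, predictableQuadraticVariation, hM0]

theorem exponentialProcess_succ (c : ℝ) (n : ℕ) (ω : Ω) :
    exponentialProcess μ ℱ M c (n + 1) ω = exponentialProcess μ ℱ M c n ω
      * exp (-(c ^ 2 / 2) * μ[fun ω' => (M (n + 1) ω' - M n ω') ^ 2 | ℱ n] ω)
      * exp (c * (M (n + 1) ω - M n ω) - c ^ 2 / 2 * (M (n + 1) ω - M n ω) ^ 2) := by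
  simp only [exponentialProcess, quadraticVariation_succ, predictableQuadraticVariation_succ,
    ← exp_add]
  ring_nf

variable {ℱ M}

theorem stronglyAdapted_quadraticVariation (hM : StronglyAdapted ℱ M) :
    StronglyAdapted ℱ (quadraticVariation M) := fun n =>
  Finset.stronglyMeasurable_fun_sum _ fun k hk =>
    (((hM k).mono (ℱ.mono (mem_Icc.1 hk).2)).sub
      ((hM (k - 1)).mono (ℱ.mono (by grind)))).pow 2

theorem stronglyAdapted_predictableQuadraticVariation :
    StronglyAdapted ℱ (predictableQuadraticVariation μ ℱ M) := fun n =>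
  Finset.stronglyMeasurable_fun_sum _ fun k hk =>
    stronglyMeasurable_condExp.mono (ℱ.mono (by grind))

theorem stronglyAdapted_exponentialProcess (hM : StronglyAdapted ℱ M) (c : ℝ) :
    StronglyAdapted ℱ (exponentialProcess μ ℱ M c) := fun n =>
  continuous_exp.comp_stronglyMeasurable (((hM n).const_mul c).sub
    (((stronglyAdapted_quadraticVariation hM n).add
      (stronglyAdapted_predictableQuadraticVariation μ n)).const_mul _))

end QuadraticVariation

section ExponentialSupermartingale

variable {ℱ : Filtration ℕ m0} {M : ℕ → Ω → ℝ}

theorem Martingale.condExp_succ_sub_ae_eq_zero (hM : Martingale M ℱ μ) (n : ℕ) :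
    μ[fun ω => M (n + 1) ω - M n ω | ℱ n] =ᵐ[μ] 0 := by
  change μ[M (n + 1) - M n | ℱ n] =ᵐ[μ] 0
  filter_upwards [condExp_sub (hM.integrable (n + 1)) (hM.integrable n) (ℱ n),
    hM.condExp_ae_eq n.le_succ, hM.condExp_ae_eq (le_refl n)] with ω hsub hsucc hself
  simp only [Pi.sub_apply] at hsub
  rw [hsub, hsucc, hself, sub_self, Pi.zero_apply]

theorem exponentialProcess_succ_le (c : ℝ) (n : ℕ) :
    exponentialProcess μ ℱ M c (n + 1)
      ≤ᵐ[μ] fun ω => exp (1 / 2) * exponentialProcess μ ℱ M c n ω := by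
  filter_upwards [condExp_nonneg (m := ℱ n) (μ := μ)
    (f := fun ω => (M (n + 1) ω - M n ω) ^ 2) (ae_of_all _ fun ω => sq_nonneg _)] with ω hnonneg
  rw [exponentialProcess_succ, mul_comm (exp (1 / 2)), mul_assoc]
  refine mul_le_mul_of_nonneg_left ?_ (exp_pos _).le
  calc _ ≤ 1 * exp (1 / 2) := by
        gcongr
        · exact exp_le_one_iff.2
            (mul_nonpos_of_nonpos_of_nonneg (neg_nonpos.2 (by positivity)) hnonneg)
        · exact mul_sub_sq_mul_sq_div_two_le _ _
    _ = exp (1 / 2) := one_mul _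

theorem Martingale.integrable_exponentialProcess [IsFiniteMeasure μ] (hM : Martingale M ℱ μ)
    (hM0 : M 0 = 0) (c : ℝ) (n : ℕ) : Integrable (exponentialProcess μ ℱ M c n) μ := by
  induction n with
  | zero =>
    rw [exponentialProcess_zero μ ℱ M hM0]
    exact integrable_const (1 : ℝ)
  | succ n ih =>
    have hmeas := (stronglyAdapted_exponentialProcess μ hM.stronglyAdapted c (n + 1)).mono (ℱ.le _)
    refine (ih.const_mul (exp (1 / 2))).mono' hmeas.aestronglyMeasurable ?_
    filter_upwards [exponentialProcess_succ_le c n] with ω h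
    rwa [norm_of_nonneg (exponentialProcess_pos μ ℱ M c _ ω).le]

theorem Martingale.supermartingale_exponentialProcess [IsFiniteMeasure μ]
    (hM : Martingale M ℱ μ) (hM0 : M 0 = 0) (hMsq : ∀ n, MemLp (M n) 2 μ) (c : ℝ) :
    Supermartingale (exponentialProcess μ ℱ M c) ℱ μ := by
  refine supermartingale_nat (stronglyAdapted_exponentialProcess μ hM.stronglyAdapted c)
    (hM.integrable_exponentialProcess hM0 c) fun n => ?_
  set D : Ω → ℝ := fun ω => M (n + 1) ω - M n ω
  set C := μ[fun ω => D ω ^ 2 | ℱ n]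
  set A : Ω → ℝ := fun ω => exponentialProcess μ ℱ M c n ω * exp (-(c ^ 2 / 2) * C ω)
  set E : Ω → ℝ := fun ω => exp (c * D ω - c ^ 2 / 2 * D ω ^ 2)
  have hAE : exponentialProcess μ ℱ M c (n + 1) = A * E :=
    funext (exponentialProcess_succ μ ℱ M c n)
  have hA : StronglyMeasurable[ℱ n] A :=
    (stronglyAdapted_exponentialProcess μ hM.stronglyAdapted c n).mul
      (continuous_exp.comp_stronglyMeasurable (stronglyMeasurable_condExp.const_mul _))
  have hD : MemLp D 2 μ := (hMsq (n + 1)).sub (hMsq n)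
  filter_upwards [condExp_mul_of_stronglyMeasurable_left hA
      (hAE ▸ hM.integrable_exponentialProcess hM0 c (n + 1)) (integrable_exp_mul_sub_sq hD.1 c),
    condExp_exp_mul_sub_sq_le (ℱ.le n) hD (hM.condExp_succ_sub_ae_eq_zero n) c] with ω hpull hE
  rw [hAE, hpull, Pi.mul_apply]
  calc A ω * μ[E | ℱ n] ω ≤ A ω * exp (c ^ 2 / 2 * C ω) := by
        gcongr
        exact mul_nonneg (exp_pos _).le (exp_pos _).le
    _ = exponentialProcess μ ℱ M c n ω := by
        rw [mul_assoc, ← exp_add, neg_mul, neg_add_cancel, exp_zero, mul_one]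

theorem Martingale.integral_exponentialProcess_le_one [IsProbabilityMeasure μ]
    (hM : Martingale M ℱ μ) (hM0 : M 0 = 0) (hMsq : ∀ n, MemLp (M n) 2 μ) (c : ℝ) (n : ℕ) :
    ∫ ω, exponentialProcess μ ℱ M c n ω ∂μ ≤ 1 := by
  simpa [exponentialProcess_zero μ ℱ M hM0] using
    (hM.supermartingale_exponentialProcess hM0 hMsq c).setIntegral_le (Nat.zero_le n) .univ

end ExponentialSupermartingale

section Concentration

variable {ℱ : Filtration ℕ m0} {M : ℕ → Ω → ℝ} [IsProbabilityMeasure μ]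

theorem Martingale.measure_le_and_quadraticVariation_le_exp_mul (hM : Martingale M ℱ μ)
    (hM0 : M 0 = 0) (hMsq : ∀ n, MemLp (M n) 2 μ) (n : ℕ) (x y : ℝ) {c : ℝ} (hc : 0 ≤ c) :
    μ {ω | x ≤ M n ω ∧ quadraticVariation M n ω + predictableQuadraticVariation μ ℱ M n ω ≤ y}
      ≤ ENNReal.ofReal (exp (c ^ 2 / 2 * y - c * x)) := by
  set ε := exp (c * x - c ^ 2 / 2 * y)
  have hsub : {ω | x ≤ M n ω ∧
      quadraticVariation M n ω + predictableQuadraticVariation μ ℱ M n ω ≤ y}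
      ⊆ {ω | ε ≤ exponentialProcess μ ℱ M c n ω} := fun ω ⟨hxM, hQy⟩ =>
    exp_le_exp.2 (by gcongr)
  have hmarkov :
      μ.real {ω | ε ≤ exponentialProcess μ ℱ M c n ω} ≤ exp (c ^ 2 / 2 * y - c * x) := by
    rw [← neg_sub, exp_neg, ← one_div, le_div_iff₀' (exp_pos _)]
    exact (mul_meas_ge_le_integral_of_nonneg
      (ae_of_all _ fun ω => (exponentialProcess_pos μ ℱ M c n ω).le)
      (hM.integrable_exponentialProcess hM0 c n) ε).trans
      (hM.integral_exponentialProcess_le_one hM0 hMsq c n)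
  calc _ ≤ μ {ω | ε ≤ exponentialProcess μ ℱ M c n ω} := measure_mono hsub
    _ = ENNReal.ofReal (μ.real {ω | ε ≤ exponentialProcess μ ℱ M c n ω}) :=
        (ofReal_measureReal).symm
    _ ≤ _ := ENNReal.ofReal_le_ofReal hmarkov

theorem Martingale.measure_le_and_quadraticVariation_le (hM : Martingale M ℱ μ)
    (hM0 : M 0 = 0) (hMsq : ∀ n, MemLp (M n) 2 μ) (n : ℕ) {x y : ℝ} (hx : 0 < x) (hy : 0 < y) :
    μ {ω | x ≤ M n ω ∧ quadraticVariation M n ω + predictableQuadraticVariation μ ℱ M n ω ≤ y}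
      ≤ ENNReal.ofReal (exp (-x ^ 2 / (2 * y))) := by
  convert hM.measure_le_and_quadraticVariation_le_exp_mul hM0 hMsq n x y (div_pos hx hy).le
    using 3
  field_simp
  ring

end Concentration

end MeasureTheory

/-- Theorem 2.1: for a locally square integrable real martingale `M` with `M 0 = 0`,
for all `x, y > 0`,
`P(|M n| ≥ x, [M]_n + ⟨M⟩_n ≤ y) ≤ 2 exp(−x²/(2y))`. -/
theorem martingale_two_sided_exponential_inequality
    {Ω : Type*} {m0 : MeasurableSpace Ω} {μ : Measure Ω} [IsProbabilityMeasure μ]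
    {ℱ : Filtration ℕ m0} {M : ℕ → Ω → ℝ}
    (hM : Martingale M ℱ μ) (hM0 : M 0 = 0) (hMsq : ∀ n, MemLp (M n) 2 μ)
    (n : ℕ) {x y : ℝ} (hx : 0 < x) (hy : 0 < y) :
    μ {ω | x ≤ |M n ω| ∧
        (∑ k ∈ Finset.Icc 1 n, (M k ω - M (k - 1) ω) ^ 2)
          + (∑ k ∈ Finset.Icc 1 n,
              (μ[fun ω' => (M k ω' - M (k - 1) ω') ^ 2 | ℱ (k - 1)]) ω) ≤ y}
      ≤ ENNReal.ofReal (2 * Real.exp (-x ^ 2 / (2 * y))) := by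
  have hupper := hM.measure_le_and_quadraticVariation_le hM0 hMsq n hx hy
  have hlower := hM.neg.measure_le_and_quadraticVariation_le (by simp [hM0])
    (fun k => (hMsq k).neg) n hx hy
  rw [quadraticVariation_neg, predictableQuadraticVariation_neg] at hlower
  calc μ _ ≤ μ ({ω | x ≤ M n ω ∧
          quadraticVariation M n ω + predictableQuadraticVariation μ ℱ M n ω ≤ y} ∪
        {ω | x ≤ (-M) n ω ∧
          quadraticVariation M n ω + predictableQuadraticVariation μ ℱ M n ω ≤ y}) :=
        measure_mono fun ω hω => (le_abs.1 hω.1).imp (And.intro · hω.2) (And.intro · hω.2)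
    _ ≤ _ := measure_union_le _ _
    _ ≤ _ := add_le_add hupper hlower
    _ = ENNReal.ofReal (2 * exp (-x ^ 2 / (2 * y))) := by
        rw [← ENNReal.ofReal_add (exp_pos _).le (exp_pos _).le, ← two_mul]
end

section
/- Let X be an integrable real random variable that is heavy on right. Then for all t ≤ 0, E[exp(tX − (t²/2)X²)] ≤ 1. -/
open MeasureTheory ProbabilityTheory Real

/-- The truncated version `T_a(x) = min(|x|, a) · sign(x)` of a real number. -/
noncomputable def truncAt (a : ℝ) (x : ℝ) : ℝ := min |x| a * Real.sign x

/-- An integrable real random variable `X` is heavy on left if `E[X] = 0` and for all `a > 0`,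
`E[T_a(X)] ≤ 0`. -/
def IsHeavyOnLeft {Ω : Type*} [MeasurableSpace Ω] (μ : MeasureTheory.Measure Ω)
    (X : Ω → ℝ) : Prop :=
  (∫ ω, X ω ∂μ) = 0 ∧ ∀ a : ℝ, 0 < a → (∫ ω, truncAt a (X ω) ∂μ) ≤ 0

/-- `X` is heavy on right if `−X` is heavy on left. -/
def IsHeavyOnRight {Ω : Type*} [MeasurableSpace Ω] (μ : MeasureTheory.Measure Ω)
    (X : Ω → ℝ) : Prop :=
  IsHeavyOnLeft μ (fun ω => -X ω)

/-!
Put `Y = t X = (-t)(-X)`, which is heavy on left, and `f y = exp (y - y² / 2)`. With the weight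
`ρ = -f'' ≥ 0` on `[0, 1]` and `f'(1) = 0`, integrating the truncations against `ρ` gives
`∫₀¹ ρ(u) T_u(y) du = sign y · (f (min |y| 1) - 1)`, and this dominates `f y - 1` for every `y`
(for `y < 0` this is `f y + f (-y) ≤ 2`, i.e. `cosh y ≤ exp (y² / 2)`). Taking expectations and
using Fubini, `E[f Y] - 1 ≤ ∫₀¹ ρ(u) E[T_u(Y)] du ≤ 0`.
-/

open Set

@[fun_prop]
lemma Real.measurable_sign : Measurable Real.sign :=
  Measurable.ite (measurableSet_lt measurable_id measurable_const) measurable_const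
    (Measurable.ite (measurableSet_lt measurable_const measurable_id) measurable_const
      measurable_const)

lemma Real.sign_mul_of_pos {c : ℝ} (hc : 0 < c) (x : ℝ) : Real.sign (c * x) = Real.sign x := by
  rcases lt_trichotomy x 0 with h | rfl | h
  · rw [Real.sign_of_neg h, Real.sign_of_neg (mul_neg_of_pos_of_neg hc h)]
  · rw [mul_zero]
  · rw [Real.sign_of_pos h, Real.sign_of_pos (mul_pos hc h)]

lemma measurable_truncAt : Measurable (Function.uncurry truncAt) := by
  unfold Function.uncurry truncAt
  fun_prop

lemma truncAt_neg (a x : ℝ) : truncAt a (-x) = -truncAt a x := by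
  simp [truncAt, Real.sign_neg]

lemma truncAt_of_nonneg {a x : ℝ} (ha : 0 ≤ a) (hx : 0 ≤ x) : truncAt a x = min x a := by
  rcases hx.eq_or_lt with rfl | hx
  · simp [truncAt, ha]
  · simp [truncAt, Real.sign_of_pos hx, abs_of_pos hx]

lemma abs_truncAt_le {a : ℝ} (ha : 0 ≤ a) (x : ℝ) : |truncAt a x| ≤ a := by
  rw [truncAt, abs_mul, abs_of_nonneg (le_min (abs_nonneg x) ha)]
  calc min |x| a * |Real.sign x| ≤ a * 1 := by
        gcongr
        · exact min_le_right _ _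
        · rcases Real.sign_apply_eq x with h | h | h <;> simp [h]
    _ = a := mul_one a

lemma truncAt_const_mul {c : ℝ} (hc : 0 < c) (a x : ℝ) :
    truncAt a (c * x) = c * truncAt (a / c) x := by
  rw [truncAt, truncAt, abs_mul, abs_of_pos hc, Real.sign_mul_of_pos hc,
    ← mul_div_cancel₀ a hc.ne', ← mul_min_of_nonneg _ _ hc.le, mul_div_cancel_left₀ _ hc.ne']
  ring

lemma IsHeavyOnLeft.const_mul {Ω : Type*} {m0 : MeasurableSpace Ω} {μ : Measure Ω}
    {X : Ω → ℝ} (hX : IsHeavyOnLeft μ X) {c : ℝ} (hc : 0 < c) :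
    IsHeavyOnLeft μ fun ω => c * X ω := by
  refine ⟨by rw [integral_const_mul, hX.1, mul_zero], fun a ha => ?_⟩
  simp only [truncAt_const_mul hc, integral_const_mul]
  exact mul_nonpos_of_nonneg_of_nonpos hc.le (hX.2 _ (div_pos ha hc))

section Fubini

variable {Ω : Type*} {m0 : MeasurableSpace Ω} {μ : Measure Ω} [IsFiniteMeasure μ]
  {Y : Ω → ℝ} {w : ℝ → ℝ} {b : ℝ}

lemma integrable_mul_truncAt_prod (hY : AEMeasurable Y μ) (hw : IntegrableOn w (Ioc 0 b)) :
    Integrable (fun p : Ω × ℝ => w p.2 * truncAt p.2 (Y p.1))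
      (μ.prod (volume.restrict (Ioc 0 b))) := by
  have hmeas : AEStronglyMeasurable (fun p : Ω × ℝ => w p.2 * truncAt p.2 (Y p.1))
      (μ.prod (volume.restrict (Ioc 0 b))) :=
    hw.aestronglyMeasurable.comp_snd.mul
      (measurable_truncAt.comp_aemeasurable
        (measurable_snd.aemeasurable.prodMk hY.comp_fst)).aestronglyMeasurable
  refine ((integrable_const b).mul_prod hw.norm).mono' hmeas ?_
  filter_upwards [Measure.quasiMeasurePreserving_snd.ae (ae_restrict_mem measurableSet_Ioc)]
    with p hp
  rw [norm_mul, mul_comm b]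
  gcongr
  exact abs_truncAt_le hp.1.le _ |>.trans hp.2

lemma integral_setIntegral_mul_truncAt_nonpos (hY : AEMeasurable Y μ)
    (hw : IntegrableOn w (Ioc 0 b)) (hw_nonneg : ∀ u ∈ Ioc 0 b, 0 ≤ w u)
    (hYtrunc : ∀ a, 0 < a → ∫ ω, truncAt a (Y ω) ∂μ ≤ 0) :
    ∫ ω, (∫ u in Ioc 0 b, w u * truncAt u (Y ω)) ∂μ ≤ 0 := by
  rw [integral_integral_swap (integrable_mul_truncAt_prod hY hw)]
  refine setIntegral_nonpos measurableSet_Ioc fun u hu => ?_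
  rw [integral_const_mul]
  exact mul_nonpos_of_nonneg_of_nonpos (hw_nonneg u hu) (hYtrunc u hu.1)

end Fubini

noncomputable def expSubHalfSq (y : ℝ) : ℝ := exp (y - y ^ 2 / 2)

/-- `-expSubHalfSq''`. -/
noncomputable def truncWeight (u : ℝ) : ℝ := (2 * u - u ^ 2) * expSubHalfSq u

lemma expSubHalfSq_zero : expSubHalfSq 0 = 1 := by
  simp [expSubHalfSq]

@[fun_prop]
lemma continuous_expSubHalfSq : Continuous expSubHalfSq := by
  unfold expSubHalfSq; fun_prop

lemma continuous_truncWeight : Continuous truncWeight := by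
  unfold truncWeight; fun_prop

lemma truncWeight_nonneg {u : ℝ} (h0 : 0 ≤ u) (h2 : u ≤ 2) : 0 ≤ truncWeight u :=
  mul_nonneg (by nlinarith) (exp_pos _).le

lemma hasDerivAt_expSubHalfSq (y : ℝ) :
    HasDerivAt expSubHalfSq ((1 - y) * expSubHalfSq y) y := by
  unfold expSubHalfSq
  convert ((hasDerivAt_id' y).fun_sub ((hasDerivAt_pow 2 y).div_const 2)).exp using 1
  push_cast
  ring

lemma hasDerivAt_one_sub_mul_expSubHalfSq (y : ℝ) :
    HasDerivAt (fun v => (1 - v) * expSubHalfSq v) (-truncWeight y) y := by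
  refine (((hasDerivAt_const y 1).fun_sub (hasDerivAt_id' y)).fun_mul
    (hasDerivAt_expSubHalfSq y)).congr_deriv ?_
  rw [truncWeight]
  ring

lemma expSubHalfSq_le_expSubHalfSq {x y : ℝ} (hxy : x ≤ y) (hy : y ≤ 1) :
    expSubHalfSq x ≤ expSubHalfSq y :=
  exp_le_exp.2 (by nlinarith)

lemma expSubHalfSq_le_expSubHalfSq_one (y : ℝ) : expSubHalfSq y ≤ expSubHalfSq 1 :=
  exp_le_exp.2 (by nlinarith [sq_nonneg (y - 1)])

lemma expSubHalfSq_add_expSubHalfSq_neg_le_two (y : ℝ) :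
    expSubHalfSq y + expSubHalfSq (-y) ≤ 2 :=
  calc expSubHalfSq y + expSubHalfSq (-y) = 2 * cosh y * exp (-(y ^ 2 / 2)) := by
        simp only [expSubHalfSq, cosh_eq, sub_eq_add_neg, exp_add, neg_sq]
        ring
    _ ≤ 2 * exp (y ^ 2 / 2) * exp (-(y ^ 2 / 2)) := by gcongr; exact cosh_le_exp_half_sq y
    _ = 2 := by rw [mul_assoc, ← exp_add, add_neg_cancel, exp_zero, mul_one]

lemma integral_truncWeight_mul_min_of_le_one {c : ℝ} (hc0 : 0 ≤ c) (hc1 : c ≤ 1) :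
    ∫ u in (0 : ℝ)..1, truncWeight u * min c u = expSubHalfSq c - 1 := by
  have hint : ∀ a b, IntervalIntegrable (fun u => truncWeight u * min c u) volume a b := fun a b =>
    (continuous_truncWeight.mul (continuous_const.min continuous_id)).intervalIntegrable _ _
  have hF (u : ℝ) : HasDerivAt (fun v => expSubHalfSq v - v * ((1 - v) * expSubHalfSq v))
      (truncWeight u * u) u := by
    refine ((hasDerivAt_expSubHalfSq u).fun_sub
      ((hasDerivAt_id' u).fun_mul (hasDerivAt_one_sub_mul_expSubHalfSq u))).congr_deriv ?_
    rw [truncWeight]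
    ring
  have hleft : ∫ u in (0 : ℝ)..c, truncWeight u * min c u = ∫ u in (0 : ℝ)..c, truncWeight u * u :=
    intervalIntegral.integral_congr fun u hu => by
      rw [uIcc_of_le hc0] at hu
      simp only [min_eq_right hu.2]
  have hright : ∫ u in c..1, truncWeight u * min c u = (∫ u in c..1, -truncWeight u) * -c := by
    rw [← intervalIntegral.integral_mul_const]
    refine intervalIntegral.integral_congr fun u hu => ?_
    rw [uIcc_of_le hc1] at hu
    simp only [min_eq_left hu.1, neg_mul_neg]
  rw [← intervalIntegral.integral_add_adjacent_intervals (hint 0 c) (hint c 1), hleft, hright,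
    intervalIntegral.integral_eq_sub_of_hasDerivAt (fun u _ => hF u)
      ((continuous_truncWeight.mul continuous_id).intervalIntegrable _ _),
    intervalIntegral.integral_eq_sub_of_hasDerivAt
      (fun u _ => hasDerivAt_one_sub_mul_expSubHalfSq u)
      (continuous_truncWeight.neg.intervalIntegrable _ _), expSubHalfSq_zero]
  ring

lemma integral_truncWeight_mul_min {c : ℝ} (hc : 0 ≤ c) :
    ∫ u in (0 : ℝ)..1, truncWeight u * min c u = expSubHalfSq (min c 1) - 1 := by
  rw [← integral_truncWeight_mul_min_of_le_one (le_min hc zero_le_one) (min_le_right c 1)]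
  refine intervalIntegral.integral_congr fun u hu => ?_
  rw [uIcc_of_le zero_le_one] at hu
  simp only [min_assoc, min_eq_right hu.2]

lemma integral_truncWeight_mul_truncAt_of_nonneg {y : ℝ} (hy : 0 ≤ y) :
    ∫ u in (0 : ℝ)..1, truncWeight u * truncAt u y = expSubHalfSq (min y 1) - 1 := by
  rw [← integral_truncWeight_mul_min hy]
  refine intervalIntegral.integral_congr fun u hu => ?_
  rw [uIcc_of_le zero_le_one] at hu
  simp only [truncAt_of_nonneg hu.1 hy]

lemma expSubHalfSq_sub_one_le_integral_truncWeight_mul_truncAt (y : ℝ) :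
    expSubHalfSq y - 1 ≤ ∫ u in (0 : ℝ)..1, truncWeight u * truncAt u y := by
  rcases le_or_gt 0 y with hy | hy
  · rw [integral_truncWeight_mul_truncAt_of_nonneg hy]
    rcases le_total y 1 with h | h
    · rw [min_eq_left h]
    · rw [min_eq_right h]
      linarith [expSubHalfSq_le_expSubHalfSq_one y]
  · have hneg : ∫ u in (0 : ℝ)..1, truncWeight u * truncAt u y
        = -(expSubHalfSq (min (-y) 1) - 1) := by
      rw [← integral_truncWeight_mul_truncAt_of_nonneg (neg_nonneg.2 hy.le),
        ← intervalIntegral.integral_neg]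
      simp only [truncAt_neg, mul_neg, neg_neg]
    have hle : expSubHalfSq y ≤ expSubHalfSq (-min (-y) 1) :=
      expSubHalfSq_le_expSubHalfSq (by linarith [min_le_left (-y) 1])
        (by linarith [lt_min (neg_pos.2 hy) one_pos])
    rw [hneg]
    linarith [expSubHalfSq_add_expSubHalfSq_neg_le_two (min (-y) 1)]

theorem integral_expSubHalfSq_le_one {Ω : Type*} {m0 : MeasurableSpace Ω} {μ : Measure Ω}
    [IsProbabilityMeasure μ] {Y : Ω → ℝ} (hY : AEMeasurable Y μ)
    (hYtrunc : ∀ a, 0 < a → ∫ ω, truncAt a (Y ω) ∂μ ≤ 0) :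
    ∫ ω, expSubHalfSq (Y ω) ∂μ ≤ 1 := by
  set G := fun ω => ∫ u in Ioc (0 : ℝ) 1, truncWeight u * truncAt u (Y ω)
  have hw : IntegrableOn truncWeight (Ioc 0 1) := continuous_truncWeight.integrableOn_Ioc
  have hG : Integrable G μ := (integrable_mul_truncAt_prod hY hw).integral_prod_left
  have hGle : ∫ ω, G ω ∂μ ≤ 0 := integral_setIntegral_mul_truncAt_nonpos hY hw
    (fun u hu => truncWeight_nonneg hu.1.le (by linarith [hu.2])) hYtrunc
  have hf : Integrable (fun ω => expSubHalfSq (Y ω)) μ :=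
    .of_bound (continuous_expSubHalfSq.measurable.comp_aemeasurable hY).aestronglyMeasurable
      (expSubHalfSq 1) (.of_forall fun ω => by
        rw [norm_of_nonneg (show 0 ≤ expSubHalfSq (Y ω) from (exp_pos _).le)]
        exact expSubHalfSq_le_expSubHalfSq_one _)
  calc ∫ ω, expSubHalfSq (Y ω) ∂μ ≤ ∫ ω, 1 + G ω ∂μ :=
        integral_mono hf ((integrable_const 1).add hG) fun ω => by
          have h := expSubHalfSq_sub_one_le_integral_truncWeight_mul_truncAt (Y ω)
          rw [intervalIntegral.integral_of_le zero_le_one] at h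
          linarith
    _ = 1 + ∫ ω, G ω ∂μ := by rw [integral_add (integrable_const 1) hG, integral_const]; simp
    _ ≤ 1 := by linarith

/-- Lemma 3.1 (2): if `X` is integrable and heavy on right, then for all `t ≤ 0`,
`E[exp(t X − (t²/2) X²)] ≤ 1`. -/
theorem heavyOnRight_expectation_exp_le_one
    {Ω : Type*} {m0 : MeasurableSpace Ω} {μ : Measure Ω} [IsProbabilityMeasure μ]
    {X : Ω → ℝ} (hXint : Integrable X μ) (hX : IsHeavyOnRight μ X)
    {t : ℝ} (ht : t ≤ 0) :
    ∫ ω, Real.exp (t * X ω - t ^ 2 / 2 * (X ω) ^ 2) ∂μ ≤ 1 := by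
  rcases ht.lt_or_eq with ht | rfl
  · calc ∫ ω, exp (t * X ω - t ^ 2 / 2 * X ω ^ 2) ∂μ = ∫ ω, expSubHalfSq (-t * -X ω) ∂μ := by
          congr with ω
          rw [expSubHalfSq]
          congr 1
          ring
      _ ≤ 1 := integral_expSubHalfSq_le_one (hXint.aemeasurable.neg.const_mul _)
          (hX.const_mul (neg_pos.2 ht)).2
  · simp
end
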